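/- Let σ₀ be the 2×2 identity matrix and σ₁ the bit-flip (Pauli-X) matrix over ℂ, let O_{x,y} (x,y ∈ {0,1}) be real numbers, and on (ℂ²)^{⊗10} define X₁ = Σ_{x₁,x₂} O_{x₁,x₂} |x₁x₂⟩⟨x₁x₂| ⊗ 1^{⊗8} and, for ι₁,ι₂ ∈ {0,1} with ι = 2ι₁+ι₂, let X_{2.ι} be the operator that projects qubits 1,2 onto |ι₁ι₂⟩, projects qubits 2ι+3, 2ι+4 onto |x,y⟩ with weight O_{x,y} summed over x,y ∈ {0,1}, and acts as the identity on the remaining six qubits. Let λ₀, λ₁ ∈ ℂ with |λ₀|² + |λ₁|² = 1, set |ψ⟩ = λ₀|0⟩^{⊗10} + λ₁|1⟩^{⊗10}, fix κ₁,…,κ₁₀ ∈ {0,1}, and set ρ_fin = (⊗_{j=1}^{10} σ_{κ_j}) |ψ⟩⟨ψ| (⊗_{j=1}^{10} σ_{κ_j}). Then tr(X₁ ρ_fin) = |λ₀|² O_{κ₁,κ₂} + |λ₁|² O_{κ̄₁,κ̄₂}, and tr((Σ_{ι=0}^{3} X_{2.ι}) ρ_fin) = |λ₀|² O_{κ_{2ι*+3},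 κ_{2ι*+4}} + |λ₁|² O_{κ̄_{2ι°+3}, κ̄_{2ι°+4}}, where ι* = 2κ₁ + κ₂, ι° = 2κ̄₁ + κ̄₂, and κ̄ = 1 − κ denotes bit negation. -/

import Mathlib

open Matrix

/-- The single-qubit operators: `sig 0` is the identity, `sig 1` the bit-flip. -/
noncomputable def sig : Fin 2 → Matrix (Fin 2) (Fin 2) ℂ
  | 0 => 1
  | 1 => !![0, 1; 1, 0]

/-- Tensor (Kronecker) product of `n` one-qubit operators, realized as a matrix
indexed by `Fin n → Fin 2`. -/
noncomputable def tensorOp {n : ℕ} (A : Fin n → Matrix (Fin 2) (Fin 2) ℂ) :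
    Matrix (Fin n → Fin 2) (Fin n → Fin 2) ℂ :=
  Matrix.of fun v w => ∏ j, A j (v j) (w j)

/-- The computational basis vector `|x⟩` of `(ℂ²)^⊗n`. -/
def basisKet {n : ℕ} (x : Fin n → Fin 2) : (Fin n → Fin 2) → ℂ :=
  fun v => if v = x then 1 else 0

/-- The rank-one operator `|ψ⟩⟨ψ|`. -/
noncomputable def ketbra {n : ℕ} (ψ : (Fin n → Fin 2) → ℂ) :
    Matrix (Fin n → Fin 2) (Fin n → Fin 2) ℂ :=
  Matrix.vecMulVec ψ (star ψ)

/-- `Σ_{x,y} O x y |x y⟩⟨x y|` on qubits `i, j`, tensored with the identity on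
all remaining qubits (a diagonal operator). -/
noncomputable def payoffOp {n : ℕ} (i j : Fin n) (O : Matrix (Fin 2) (Fin 2) ℝ) :
    Matrix (Fin n → Fin 2) (Fin n → Fin 2) ℂ :=
  Matrix.of fun v w => if v = w then (O (v i) (v j) : ℂ) else 0

/-- First bit `ι₁` of `ι = 2ι₁ + ι₂ ∈ {0,1,2,3}`. -/
def bit1 : Fin 4 → Fin 2 := ![0, 0, 1, 1]

/-- Second bit `ι₂` of `ι = 2ι₁ + ι₂ ∈ {0,1,2,3}`. -/
def bit2 : Fin 4 → Fin 2 := ![0, 1, 0, 1]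

/-- The index `ι = 2ι₁ + ι₂ ∈ {0,1,2,3}` built from its two bits. -/
def idx (a b : Fin 2) : Fin 4 := ⟨2 * a.val + b.val, by omega⟩

/-- Zero-based index of qubit `2ι + 3`. -/
def qa : Fin 4 → Fin 10 := ![2, 4, 6, 8]

/-- Zero-based index of qubit `2ι + 4`. -/
def qb : Fin 4 → Fin 10 := ![3, 5, 7, 9]

/-- The measurement operator `M_ι = |ι₁ι₂⟩⟨ι₁ι₂| ⊗ 1^{⊗8}` on `(ℂ²)^⊗10`. -/
noncomputable def Mop (ι : Fin 4) : Matrix (Fin 10 → Fin 2) (Fin 10 → Fin 2) ℂ :=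
  Matrix.of fun v w => if v = w ∧ v 0 = bit1 ι ∧ v 1 = bit2 ι then 1 else 0

/-- The operator `X_{2.ι}` on `(ℂ²)^⊗10`: projects qubits 1,2 onto `|ι₁ι₂⟩`,
projects qubits `2ι+3, 2ι+4` onto `|x,y⟩` with weight `O x y` summed over
`x, y ∈ {0,1}`, and acts as the identity on the remaining six qubits. -/
noncomputable def X2op (O : Matrix (Fin 2) (Fin 2) ℝ) (ι : Fin 4) :
    Matrix (Fin 10 → Fin 2) (Fin 10 → Fin 2) ℂ :=
  Matrix.of fun v w =>
    if v = w ∧ v 0 = bit1 ι ∧ v 1 = bit2 ι then (O (v (qa ι)) (v (qb ι)) : ℂ) else 0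

/-! The operator `⊗ⱼ σ_{κⱼ}` is the permutation `v ↦ v + κ` of the computational basis, so it
conjugates `λ₀|0…0⟩ + λ₁|1…1⟩` into `λ₀|κ⟩ + λ₁|κ̄⟩`. Both payoff observables are diagonal in that
basis, and a diagonal observable `D` has expectation `|λ₀|² D(κ) + |λ₁|² D(κ̄)` in this state. -/

lemma fin_two_add_add_cancel_right (a b : Fin 2) : a + b + b = a := by
  fin_cases a <;> fin_cases b <;> rfl

lemma fin_two_one_sub_eq_add_one (a : Fin 2) : 1 - a = a + 1 := by
  fin_cases a <;> rfl

lemma pi_fin_two_add_add_cancel_right {ι : Type*} (v w : ι → Fin 2) : v + w + w = v :=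
  funext fun j => fin_two_add_add_cancel_right (v j) (w j)

lemma sig_apply (k a b : Fin 2) : sig k a b = if b = a + k then 1 else 0 := by
  fin_cases k <;> fin_cases a <;> fin_cases b <;> simp [sig]

lemma tensorOp_sig_apply {n : ℕ} (κ v w : Fin n → Fin 2) :
    tensorOp (fun j => sig (κ j)) v w = if w = v + κ then 1 else 0 := by
  simp [tensorOp, sig_apply, Finset.prod_boole, funext_iff]

lemma tensorOp_sig_mul_apply {n : ℕ} (κ : Fin n → Fin 2)
    (M : Matrix (Fin n → Fin 2) (Fin n → Fin 2) ℂ) (v w : Fin n → Fin 2) :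
    (tensorOp (fun j => sig (κ j)) * M) v w = M (v + κ) w := by
  simp [Matrix.mul_apply, tensorOp_sig_apply]

lemma mul_tensorOp_sig_apply {n : ℕ} (κ : Fin n → Fin 2)
    (M : Matrix (Fin n → Fin 2) (Fin n → Fin 2) ℂ) (v w : Fin n → Fin 2) :
    (M * tensorOp (fun j => sig (κ j))) v w = M v (w + κ) := by
  have hflip (u : Fin n → Fin 2) : w = u + κ ↔ u = w + κ := by
    constructor <;> rintro rfl <;> rw [pi_fin_two_add_add_cancel_right]
  simp [Matrix.mul_apply, tensorOp_sig_apply, hflip]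

lemma tensorOp_sig_conj_ketbra_apply {n : ℕ} (κ : Fin n → Fin 2) (ψ : (Fin n → Fin 2) → ℂ)
    (v w : Fin n → Fin 2) :
    (tensorOp (fun j => sig (κ j)) * ketbra ψ * tensorOp (fun j => sig (κ j))) v w
      = ψ (v + κ) * star (ψ (w + κ)) := by
  rw [mul_tensorOp_sig_apply, tensorOp_sig_mul_apply]
  rfl

lemma trace_diagonal_mul_tensorOp_sig_conj_ketbra {n : ℕ} (d : (Fin n → Fin 2) → ℂ)
    (κ : Fin n → Fin 2) (ψ : (Fin n → Fin 2) → ℂ) :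
    (diagonal d * (tensorOp (fun j => sig (κ j)) * ketbra ψ * tensorOp (fun j => sig (κ j)))).trace
      = ∑ v, d (v + κ) * Complex.normSq (ψ v) := by
  rw [← Equiv.sum_comp (Equiv.addRight κ)]
  simp [Matrix.trace, diagonal_mul, tensorOp_sig_conj_ketbra_apply, Complex.mul_conj,
    pi_fin_two_add_add_cancel_right]

def ghzState {n : ℕ} (l₀ l₁ : ℂ) : (Fin n → Fin 2) → ℂ := fun v =>
  l₀ * basisKet (fun _ => 0) v + l₁ * basisKet (fun _ => 1) v

lemma sum_mul_normSq_ghzState {n : ℕ} [NeZero n] (f : (Fin n → Fin 2) → ℝ) (l₀ l₁ : ℂ) :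
    ∑ v, f v * Complex.normSq (ghzState l₀ l₁ v)
      = Complex.normSq l₀ * f 0 + Complex.normSq l₁ * f 1 := by
  have h01 : (0 : Fin n → Fin 2) ≠ 1 := fun h => by simpa using congrFun h 0
  simp only [ghzState, basisKet, ← Pi.zero_def, ← Pi.one_def]
  rw [Fintype.sum_eq_add 0 1 h01]
  · simp [h01, h01.symm, mul_comm]
  · rintro v ⟨hv0, hv1⟩
    simp [hv0, hv1]

lemma trace_diagonal_mul_conj_ghzState {n : ℕ} [NeZero n] (d : (Fin n → Fin 2) → ℝ)
    (κ : Fin n → Fin 2) (l₀ l₁ : ℂ) :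
    (diagonal (fun v => (d v : ℂ)) * (tensorOp (fun j => sig (κ j)) * ketbra (ghzState l₀ l₁) *
        tensorOp (fun j => sig (κ j)))).trace
      = ((Complex.normSq l₀ * d κ + Complex.normSq l₁ * d (κ + 1) : ℝ) : ℂ) := by
  rw [trace_diagonal_mul_tensorOp_sig_conj_ketbra, add_comm κ 1]
  exact_mod_cast (zero_add κ ▸ sum_mul_normSq_ghzState (fun v => d (v + κ)) l₀ l₁)

lemma payoffOp_eq_diagonal {n : ℕ} (i j : Fin n) (O : Matrix (Fin 2) (Fin 2) ℝ) :
    payoffOp i j O = diagonal fun v => ((O (v i) (v j) : ℝ) : ℂ) := by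
  ext v w
  simp [payoffOp, diagonal_apply]

lemma sum_X2op_eq_diagonal (O : Matrix (Fin 2) (Fin 2) ℝ) :
    ∑ ι : Fin 4, X2op O ι
      = diagonal fun v => ((O (v (qa (idx (v 0) (v 1)))) (v (qb (idx (v 0) (v 1)))) : ℝ) : ℂ) := by
  ext v w
  rw [Matrix.sum_apply, Fin.sum_univ_four]
  by_cases hvw : v = w
  · subst hvw
    obtain h0 | h0 : v 0 = 0 ∨ v 0 = 1 := by omega
    all_goals obtain h1 | h1 : v 1 = 0 ∨ v 1 = 1 := by omega
    all_goals simp [X2op, h0, h1, bit1, bit2, idx, qa, qb]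
  · simp [X2op, hvw]

theorem stmt_17_general (O : Matrix (Fin 2) (Fin 2) ℝ) (l₀ l₁ : ℂ) (κ : Fin 10 → Fin 2) :
    let ψ : (Fin 10 → Fin 2) → ℂ := fun v =>
      l₀ * basisKet (fun _ => 0) v + l₁ * basisKet (fun _ => 1) v
    let Ufull := tensorOp fun j => sig (κ j)
    let ρfin := Ufull * ketbra ψ * Ufull
    let ι' : Fin 4 := idx (κ 0) (κ 1)
    let ι'' : Fin 4 := idx (1 - κ 0) (1 - κ 1)
    (payoffOp 0 1 O * ρfin).trace
        = ((Complex.normSq l₀ * O (κ 0) (κ 1)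
            + Complex.normSq l₁ * O (1 - κ 0) (1 - κ 1) : ℝ) : ℂ)
      ∧ ((∑ ι : Fin 4, X2op O ι) * ρfin).trace
        = ((Complex.normSq l₀ * O (κ (qa ι')) (κ (qb ι'))
            + Complex.normSq l₁ * O (1 - κ (qa ι'')) (1 - κ (qb ι'')) : ℝ) : ℂ) := by
  intro ψ Ufull ρfin ι' ι''
  rw [payoffOp_eq_diagonal, sum_X2op_eq_diagonal]
  constructor
  · refine (trace_diagonal_mul_conj_ghzState _ κ l₀ l₁).trans ?_
    simp [fin_two_one_sub_eq_add_one]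
  · refine (trace_diagonal_mul_conj_ghzState _ κ l₀ l₁).trans ?_
    simp [fin_two_one_sub_eq_add_one, ι', ι'']

/-- with initial state `λ₀|0⟩^{⊗10} + λ₁|1⟩^{⊗10}` the quantum
protocol yields first-stage outcome `|λ₀|² O(κ₁,κ₂) + |λ₁|² O(κ̄₁,κ̄₂)` and
second-stage outcome `|λ₀|² O(κ_{2ι*+3}, κ_{2ι*+4}) + |λ₁|² O(κ̄_{2ι°+3}, κ̄_{2ι°+4})`,
where `ι* = 2κ₁ + κ₂` and `ι° = 2κ̄₁ + κ̄₂`. -/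
theorem stmt_17 (O : Matrix (Fin 2) (Fin 2) ℝ) (l₀ l₁ : ℂ)
    (hunit : Complex.normSq l₀ + Complex.normSq l₁ = 1) (κ : Fin 10 → Fin 2) :
    let ψ : (Fin 10 → Fin 2) → ℂ := fun v =>
      l₀ * basisKet (fun _ => 0) v + l₁ * basisKet (fun _ => 1) v
    let Ufull := tensorOp fun j => sig (κ j)
    let ρfin := Ufull * ketbra ψ * Ufull
    let ι' : Fin 4 := idx (κ 0) (κ 1)
    let ι'' : Fin 4 := idx (1 - κ 0) (1 - κ 1)
    (payoffOp 0 1 O * ρfin).trace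
        = ((Complex.normSq l₀ * O (κ 0) (κ 1)
            + Complex.normSq l₁ * O (1 - κ 0) (1 - κ 1) : ℝ) : ℂ)
      ∧ ((∑ ι : Fin 4, X2op O ι) * ρfin).trace
        = ((Complex.normSq l₀ * O (κ (qa ι')) (κ (qb ι'))
            + Complex.normSq l₁ * O (1 - κ (qa ι'')) (1 - κ (qb ι'')) : ℝ) : ℂ) :=
  stmt_17_general O l₀ l₁ κ
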